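/- arXiv:2003.02605 — 2 statements merged into one kernel-verified Lean document; each statement's English description precedes it below -/
import Mathlib

section
/- Let $T = (t_1, t_2)$ be an interval and let $\mathcal{I}$ be a finite family of weighted intervals contained in $T$, with total optimal independent-set weight $\mathrm{OPT}$. Suppose every interval in an optimal independent set $\{C_1, \dots, C_K\}$ (ordered left to right, with $C_j = (x_j, y_j)$, so $y_j \leq x_{j+1}$) has weight $w_j \in [(1+\varepsilon)^{k_j}, (1+\varepsilon)^{k_j+1})$ for known integers $k_j$. Then the following greedy procedure succeeds and produces an independent set of weight at least $(1+\varepsilon)^{-1} \sum_j w_j$: starting with $t = t_1$, for $j = 1, \dots, K$, pick any interval $\hat{C}_j = (\hat{x}_j, \hat{y}_j) \subseteq (t, t_2)$ with weight in $[(1+\varepsilon)^{k_j}, (1+\varepsilon)^{k_j+1})$ minimizing $\hat{y}_j$, then set $t = \hat{y}_j$. Moreover, the greedy intervals satisfy $\hat{y}_j \leq y_j$ for all $j$ (so an interval always exists at each step), and the resulting intervals are pairwise disjoint. -/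
/-!
Greedy stays ahead: by induction, the `j`-th greedy right endpoint is at most `y (C j)`, because
`C j` starts after `y (C (j - 1))`, hence after the previous greedy endpoint, so it was a
candidate at step `j`. Two weights in the same class `[(1+ε)^k, (1+ε)^(k+1))` differ by a factor
less than `1 + ε`, which gives the weight bound term by term.
-/

theorem greedy_stays_ahead {K : ℕ} (t : ℝ) (xC yC yg : ℕ → ℝ) (hstart : 0 < K → t ≤ xC 0)
    (hchain : ∀ j, j + 1 < K → yC j ≤ xC (j + 1))
    (hmin : ∀ j < K, (if j = 0 then t else yg (j - 1)) ≤ xC j → yg j ≤ yC j) :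
    ∀ j < K, yg j ≤ yC j := by
  intro j
  induction j with
  | zero => exact fun h0 => hmin 0 h0 (by simpa using hstart h0)
  | succ n ih =>
    intro hn
    exact hmin (n + 1) hn <| by
      simpa using (ih (Nat.lt_of_succ_lt hn)).trans (hchain n hn)

theorem right_le_left_of_lt_of_chain {K : ℕ} (x y : ℕ → ℝ) (hlt : ∀ j < K, x j < y j)
    (hstep : ∀ j, j + 1 < K → y j ≤ x (j + 1)) :
    ∀ j j' : ℕ, j < j' → j' < K → y j ≤ x j' := by
  intro j j' hjj' hj'
  induction j' with
  | zero => omega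
  | succ n ih =>
    rcases Nat.lt_succ_iff_lt_or_eq.mp hjj' with h | rfl
    · have hn : n < K := Nat.lt_of_succ_lt hj'
      calc y j ≤ x n := ih h hn
        _ ≤ y n := (hlt n hn).le
        _ ≤ x (n + 1) := hstep n hj'
    · exact hstep j hj'

theorem le_mul_of_le_zpow_succ_of_zpow_le {q a b : ℝ} {k : ℤ} (hq : 0 < q)
    (ha : a ≤ q ^ (k + 1)) (hb : q ^ k ≤ b) : a ≤ q * b :=
  calc a ≤ q ^ (k + 1) := ha
    _ = q * q ^ k := by rw [zpow_add_one₀ hq.ne', mul_comm]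
    _ ≤ q * b := mul_le_mul_of_nonneg_left hb hq.le

/-- Greedy exchange argument for weighted intervals: if `g` is built greedily (each step
picking an interval of the prescribed weight class, starting after the previous right
endpoint, with minimal right endpoint), and `C` is an independent set fitting the same
weight-class pattern, then `y (g j) ≤ y (C j)` for all `j`, the greedy intervals form a
chain (pairwise disjoint), and the greedy weight is at least `(1+ε)⁻¹` times that of `C`. -/
theorem stmt13 {ι : Type*} (S : Finset ι) (x y w : ι → ℝ) (ε t1 t2 : ℝ) (hε : 0 < ε)
    (hsub : ∀ i ∈ S, t1 ≤ x i ∧ x i < y i ∧ y i ≤ t2)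
    (K : ℕ) (C g : ℕ → ι) (kcls : ℕ → ℤ)
    (hC : ∀ j < K, C j ∈ S)
    (hCw : ∀ j < K, (1 + ε) ^ kcls j ≤ w (C j) ∧ w (C j) < (1 + ε) ^ (kcls j + 1))
    (hCchain : ∀ j, j + 1 < K → y (C j) ≤ x (C (j + 1)))
    (hg : ∀ j < K, g j ∈ S)
    (hgw : ∀ j < K, (1 + ε) ^ kcls j ≤ w (g j) ∧ w (g j) < (1 + ε) ^ (kcls j + 1))
    (hgstart : ∀ j < K, (if j = 0 then t1 else y (g (j - 1))) ≤ x (g j))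
    (hgmin : ∀ j < K, ∀ i ∈ S,
      ((1 + ε) ^ kcls j ≤ w i ∧ w i < (1 + ε) ^ (kcls j + 1)) →
      (if j = 0 then t1 else y (g (j - 1))) ≤ x i → y (g j) ≤ y i) :
    (∀ j < K, y (g j) ≤ y (C j)) ∧
    (∀ j j' : ℕ, j < j' → j' < K → y (g j) ≤ x (g j')) ∧
    (1 + ε)⁻¹ * (∑ j ∈ Finset.range K, w (C j)) ≤ ∑ j ∈ Finset.range K, w (g j) := by
  have hq : (0 : ℝ) < 1 + ε := by linarith
  refine ⟨?_, ?_, ?_⟩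
  · exact greedy_stays_ahead t1 (x ∘ C) (y ∘ C) (y ∘ g) (fun hK => (hsub _ (hC 0 hK)).1)
      hCchain fun j hj => hgmin j hj (C j) (hC j hj) (hCw j hj)
  · refine right_le_left_of_lt_of_chain (x ∘ g) (y ∘ g)
      (fun j hj => (hsub _ (hg j hj)).2.1) fun j hj => ?_
    simpa using hgstart (j + 1) hj
  · rw [inv_mul_le_iff₀ hq, Finset.mul_sum]
    refine Finset.sum_le_sum fun j hj => ?_
    rw [Finset.mem_range] at hj
    exact le_mul_of_le_zpow_succ_of_zpow_le hq (hCw j hj).2.le (hgw j hj).1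
end

section
/- Consider the dynamic prefix-parity problem on an array $A$ of size $N$ (operations: set $A[i] \in \{0,1\}$; query $(\sum_{j \leq i} A[j]) \bmod 2$). Each operation can be simulated by $O(1)$ operations of a dynamic weighted maximum independent set of intervals data structure over $[0,N]$ (insert/delete a weighted interval; query the weight of the maximum weight independent set), as follows: maintain interval $[i-1, i)$ of weight 1 iff $A[i] = 1$; to answer a prefix query at $i$, insert the interval $[i, N]$ with weight $N$, query the maximum independent set weight $k$, return $(k - N) \bmod 2$, and delete $[i,N]$. The returned value equals $(\sum_{j \leq i} A[j]) \bmod 2$. -/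
open Finset

lemma sum_eq_card_filter_eq_one_of_le_one {ι : Type*} (s : Finset ι) (A : ι → ℕ)
    (hA : ∀ j, A j ≤ 1) : ∑ j ∈ s, A j = #(s.filter (A · = 1)) := by
  rw [card_filter]
  refine sum_congr rfl fun j _ => ?_
  rcases Nat.le_one_iff_eq_zero_or_eq_one.mp (hA j) with h | h <;> simp [h]

lemma Ico_sub_one_inter_Ico_sub_one_eq_empty {j j' : ℕ} (hne : j ≠ j') :
    Set.Ico ((j : ℝ) - 1) j ∩ Set.Ico ((j' : ℝ) - 1) j' = ∅ := by
  wlog h : j < j' generalizing j j'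
  · rw [Set.inter_comm]
    exact this hne.symm (by omega)
  have hj : (j : ℝ) ≤ j' - 1 := by
    have : (j : ℝ) + 1 ≤ j' := by exact_mod_cast h
    linarith
  exact Set.eq_empty_of_forall_notMem fun x ⟨hx, hx'⟩ => by linarith [hx.2, hx'.1]

lemma Ico_sub_one_inter_Icc_eq_empty_iff {i j N : ℕ} (hjN : j ≤ N) :
    Set.Ico ((j : ℝ) - 1) j ∩ Set.Icc (i : ℝ) N = ∅ ↔ j ≤ i := by
  constructor
  · intro h
    by_contra! hij
    have hij' : (i : ℝ) + 1 ≤ j := by exact_mod_cast hij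
    have hjN' : (j : ℝ) ≤ N := by exact_mod_cast hjN
    have hmem : (j : ℝ) - 1 ∈ Set.Ico ((j : ℝ) - 1) j ∩ Set.Icc (i : ℝ) N :=
      ⟨⟨le_rfl, by linarith⟩, by linarith, by linarith⟩
    simp [h] at hmem
  · intro hji
    have hji' : (j : ℝ) ≤ i := by exact_mod_cast hji
    exact Set.eq_empty_of_forall_notMem fun x ⟨hx, hx'⟩ => by linarith [hx.2, hx'.1]

lemma forall_Ico_inter_Icc_eq_empty_iff_subset {T : Finset ℕ} {i N : ℕ} {p : ℕ → Prop}
    [DecidablePred p] (hT : T ⊆ (Icc 1 N).filter p) :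
    (∀ j ∈ T, Set.Ico ((j : ℝ) - 1) j ∩ Set.Icc (i : ℝ) N = ∅) ↔ T ⊆ (Icc 1 i).filter p := by
  refine forall₂_congr fun j hj => ?_
  obtain ⟨hjN, hpj⟩ := mem_filter.1 (hT hj)
  rw [Ico_sub_one_inter_Icc_eq_empty_iff (mem_Icc.1 hjN).2]
  simp [hpj, (mem_Icc.1 hjN).1]

theorem stmt16_general (N i : ℕ) (hiN : i ≤ N) (A : ℕ → ℕ) (hA : ∀ j, A j ≤ 1) :
    IsGreatest
      { W : ℝ | ∃ T : Finset ℕ, T ⊆ (Finset.Icc 1 N).filter (fun j => A j = 1) ∧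
          ∃ heavy : Bool,
            (∀ j ∈ T, ∀ j' ∈ T, j ≠ j' →
              Set.Ico ((j : ℝ) - 1) (j : ℝ) ∩ Set.Ico ((j' : ℝ) - 1) (j' : ℝ) = ∅) ∧
            (heavy = true → ∀ j ∈ T,
              Set.Ico ((j : ℝ) - 1) (j : ℝ) ∩ Set.Icc (i : ℝ) (N : ℝ) = ∅) ∧
            W = (T.card : ℝ) + (if heavy then (N : ℝ) else 0) }
      ((N : ℝ) + ∑ j ∈ Finset.Icc 1 i, (A j : ℝ)) ∧
    ((N + ∑ j ∈ Finset.Icc 1 i, A j) - N) % 2 = (∑ j ∈ Finset.Icc 1 i, A j) % 2 := by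
  have hsum : ∑ j ∈ Icc 1 i, (A j : ℝ) = #((Icc 1 i).filter (A · = 1)) := by
    exact_mod_cast sum_eq_card_filter_eq_one_of_le_one _ A hA
  have hprefix : (Icc 1 i).filter (A · = 1) ⊆ (Icc 1 N).filter (A · = 1) :=
    filter_subset_filter _ (Icc_subset_Icc_right hiN)
  refine ⟨⟨⟨_, hprefix, true, fun j _ j' _ => Ico_sub_one_inter_Ico_sub_one_eq_empty,
    fun _ => (forall_Ico_inter_Icc_eq_empty_iff_subset hprefix).2 subset_rfl,
    by simp [hsum, add_comm]⟩, ?_⟩, by omega⟩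
  rintro W ⟨T, hT, heavy, -, hheavy, rfl⟩
  cases heavy
  -- Without the heavy interval at most `N` unit intervals fit, so the weight is at most `N`.
  · have hTN : #T ≤ N := (card_le_card hT).trans ((card_filter_le _ _).trans (by simp))
    have : (0 : ℝ) ≤ ∑ j ∈ Icc 1 i, (A j : ℝ) := sum_nonneg fun j _ => by positivity
    simp only [Bool.false_eq_true, if_false]
    linarith [(Nat.cast_le (α := ℝ)).2 hTN]
  · have hTi := (forall_Ico_inter_Icc_eq_empty_iff_subset hT).1 (hheavy rfl)
    simp only [if_true, hsum]
    linarith [(Nat.cast_le (α := ℝ)).2 (card_le_card hTi)]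

/-- Prefix-parity via dynamic weighted independent set of intervals: with unit intervals
`[j-1, j)` present for `j` with `A j = 1` and a heavy interval `[i, N]` of weight `N`,
the maximum weight of an independent set is exactly `N + ∑_{j ≤ i} A j`, and subtracting
`N` and reducing mod `2` recovers the prefix parity. -/
theorem stmt16 (N i : ℕ) (hi : 1 ≤ i) (hiN : i ≤ N) (A : ℕ → ℕ) (hA : ∀ j, A j ≤ 1) :
    IsGreatest
      { W : ℝ | ∃ T : Finset ℕ, T ⊆ (Finset.Icc 1 N).filter (fun j => A j = 1) ∧
          ∃ heavy : Bool,
            (∀ j ∈ T, ∀ j' ∈ T, j ≠ j' →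
              Set.Ico ((j : ℝ) - 1) (j : ℝ) ∩ Set.Ico ((j' : ℝ) - 1) (j' : ℝ) = ∅) ∧
            (heavy = true → ∀ j ∈ T,
              Set.Ico ((j : ℝ) - 1) (j : ℝ) ∩ Set.Icc (i : ℝ) (N : ℝ) = ∅) ∧
            W = (T.card : ℝ) + (if heavy then (N : ℝ) else 0) }
      ((N : ℝ) + ∑ j ∈ Finset.Icc 1 i, (A j : ℝ)) ∧
    ((N + ∑ j ∈ Finset.Icc 1 i, A j) - N) % 2 = (∑ j ∈ Finset.Icc 1 i, A j) % 2 :=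
  stmt16_general N i hiN A hA
end
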